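/- Let P > 0 and β ∈ ℝ, and define R(t) := (∫₀^t cos(2πs/P − β) ds, ∫₀^t sin(2πs/P − β) ds). Then for every t ≥ 0, Area(R)|₀^t = (P/(4π)) (t − (P/(2π)) sin(2πt/P)); in particular the value is independent of β, and Area(R)|₀^t ≥ t³ / (2π² P) for all t ∈ [0, P]. -/

import Mathlib

/-! With `θ = ω s - β`, the arc has velocity `(cos θ, sin θ)` and position
`ω⁻¹ (sin θ + sin β, cos β - cos θ)`, so `R₂' R₁ - R₁' R₂ = ω⁻¹ (1 - cos (θ + β)) = ω⁻¹ (1 - cos (ω s))`: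
the phase cancels, and integrating gives the area with `ω = 2π / P`. The lower bound is
`x³ / (2π³) ≤ x - sin x` on `[0, 2π]`, which follows on `[0, π]` from `cos x ≤ 1 - 2x² / π²`
and on `[π, 2π]` from `sin x ≤ 0`. -/

open MeasureTheory Real

noncomputable section

/-- The area swept by the planar curve `R = (R₁, R₂)` on `[a, b]`:
`Area(R)|_a^b = ½ ∫_a^b (R₂' R₁ − R₁' R₂)`. -/
def sweptArea (R₁ R₂ : ℝ → ℝ) (a b : ℝ) : ℝ :=
  (1 / 2) * ∫ s in a..b, (deriv R₂ s * R₁ s - deriv R₁ s * R₂ s)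

/-- The excess swept by the planar curve `R = (R₁, R₂)` on `[0, t]`:
`Exc(R)|₀^t = Σ_{ℓ,m} ∫₀^t (∫₀^s |ξ R_ℓ'(ξ)| dξ) |R_m'(s)| ds`. -/
def excess (R₁ R₂ : ℝ → ℝ) (t : ℝ) : ℝ :=
  ∑ l : Fin 2, ∑ m : Fin 2,
    ∫ s in (0:ℝ)..t,
      (∫ ξ in (0:ℝ)..s, |ξ * deriv (![R₁, R₂] l) ξ|) * |deriv (![R₁, R₂] m) s|

theorem integral_cos_mul_sub {ω : ℝ} (hω : ω ≠ 0) (β t : ℝ) :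
    ∫ s in (0:ℝ)..t, cos (ω * s - β) = (sin (ω * t - β) + sin β) / ω := by
  simp [hω, div_eq_inv_mul]

theorem integral_sin_mul_sub {ω : ℝ} (hω : ω ≠ 0) (β t : ℝ) :
    ∫ s in (0:ℝ)..t, sin (ω * s - β) = (cos β - cos (ω * t - β)) / ω := by
  simp [hω, div_eq_inv_mul]

theorem integral_one_sub_cos_mul {ω : ℝ} (hω : ω ≠ 0) (t : ℝ) :
    ∫ s in (0:ℝ)..t, (1 - cos (ω * s)) = t - sin (ω * t) / ω := by
  rw [intervalIntegral.integral_sub intervalIntegrable_const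
    ((by fun_prop : Continuous fun s => cos (ω * s)).intervalIntegrable _ _)]
  simp [hω, div_eq_inv_mul]

theorem sweptArea_integral {f g : ℝ → ℝ} (hf : Continuous f) (hg : Continuous g) (a b : ℝ) :
    sweptArea (fun t => ∫ s in (0:ℝ)..t, f s) (fun t => ∫ s in (0:ℝ)..t, g s) a b =
      (1 / 2) * ∫ s in a..b, (g s * ∫ r in (0:ℝ)..s, f r) - f s * ∫ r in (0:ℝ)..s, g r := by
  simp only [sweptArea, hf.deriv_integral, hg.deriv_integral]

theorem sweptArea_circularArc {ω : ℝ} (hω : ω ≠ 0) (β t : ℝ) :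
    sweptArea (fun t => ∫ s in (0:ℝ)..t, cos (ω * s - β))
        (fun t => ∫ s in (0:ℝ)..t, sin (ω * s - β)) 0 t =
      (t - sin (ω * t) / ω) / (2 * ω) := by
  have hintegrand (s : ℝ) : (sin (ω * s - β) * ∫ r in (0:ℝ)..s, cos (ω * r - β)) -
      cos (ω * s - β) * (∫ r in (0:ℝ)..s, sin (ω * r - β)) = (1 - cos (ω * s)) / ω := by
    have hcos : cos (ω * s) = cos (ω * s - β) * cos β - sin (ω * s - β) * sin β := by
      rw [← cos_add, sub_add_cancel]
    rw [integral_cos_mul_sub hω, integral_sin_mul_sub hω, hcos]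
    field_simp
    linear_combination sin_sq_add_cos_sq (ω * s - β)
  rw [sweptArea_integral (by fun_prop) (by fun_prop)]
  simp only [hintegrand, intervalIntegral.integral_div, integral_one_sub_cos_mul hω]
  ring

theorem cube_div_le_sub_sin_of_le_pi {x : ℝ} (hx₀ : 0 ≤ x) (hxπ : x ≤ π) :
    x ^ 3 / (2 * π ^ 3) ≤ x - sin x := by
  set g : ℝ → ℝ := fun y => y - sin y - y ^ 3 / (2 * π ^ 3)
  have hg' (y : ℝ) : HasDerivAt g (1 - cos y - 3 * y ^ 2 / (2 * π ^ 3)) y :=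
    (((hasDerivAt_id y).sub (hasDerivAt_sin y)).sub
      ((hasDerivAt_pow 3 y).div_const (2 * π ^ 3))).congr_deriv (by norm_num)
  have hg'_nonneg (y : ℝ) (hy : y ∈ interior (Set.Icc 0 π)) :
      0 ≤ 1 - cos y - 3 * y ^ 2 / (2 * π ^ 3) := by
    rw [interior_Icc] at hy
    have hcos : cos y ≤ 1 - 2 / π ^ 2 * y ^ 2 :=
      cos_le_one_sub_mul_cos_sq (abs_le.2 ⟨by linarith [hy.1, pi_pos], hy.2.le⟩)
    have hcoef : 3 / (2 * π ^ 3) ≤ 2 / π ^ 2 := by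
      rw [div_le_div_iff₀ (by positivity) (by positivity)]
      nlinarith [pi_gt_three, pow_pos pi_pos 2]
    have := mul_le_mul_of_nonneg_right hcoef (sq_nonneg y)
    rw [div_mul_eq_mul_div] at this
    linarith
  have hmono : MonotoneOn g (Set.Icc 0 π) :=
    monotoneOn_of_hasDerivWithinAt_nonneg (convex_Icc 0 π)
      (fun y _ => (hg' y).continuousAt.continuousWithinAt)
      (fun y _ => (hg' y).hasDerivWithinAt) hg'_nonneg
  have := hmono ⟨le_rfl, pi_pos.le⟩ ⟨hx₀, hxπ⟩ hx₀
  norm_num [g] at this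
  linarith

theorem cube_div_le_sub_sin {x : ℝ} (hx₀ : 0 ≤ x) (hx : x ≤ 2 * π) :
    x ^ 3 / (2 * π ^ 3) ≤ x - sin x := by
  rcases le_or_gt x π with hxπ | hπx
  · exact cube_div_le_sub_sin_of_le_pi hx₀ hxπ
  have hsin : sin x ≤ 0 := by
    rw [← sin_sub_two_pi]
    exact sin_nonpos_of_nonpos_of_neg_pi_le (by linarith) (by linarith)
  have hcube : x ^ 3 / (2 * π ^ 3) ≤ x := by
    rw [div_le_iff₀ (by positivity)]
    have hsq : x ^ 2 ≤ 2 * π ^ 3 := by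
      nlinarith [pi_gt_three, mul_le_mul hx hx hx₀ (by positivity)]
    nlinarith [mul_le_mul_of_nonneg_left hsq hx₀]
  linarith

/-- **Area swept by the circular arc of a pointed drop.** For `P > 0`, `β ∈ ℝ`, and
`R(t) = (∫₀^t cos(2πs/P − β) ds, ∫₀^t sin(2πs/P − β) ds)`, one has, for every `t ≥ 0`,
`Area(R)|₀^t = (P/(4π))(t − (P/(2π)) sin(2πt/P))` — in particular independent of `β` —
and `Area(R)|₀^t ≥ t³/(2π²P)` for all `t ∈ [0, P]`. -/
theorem pointed_drop_arc_area (P β : ℝ) (hP : 0 < P) :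
    (∀ t : ℝ, 0 ≤ t →
      sweptArea (fun t => ∫ s in (0:ℝ)..t, Real.cos (2 * Real.pi * s / P - β))
          (fun t => ∫ s in (0:ℝ)..t, Real.sin (2 * Real.pi * s / P - β)) 0 t
        = (P / (4 * Real.pi)) *
            (t - (P / (2 * Real.pi)) * Real.sin (2 * Real.pi * t / P))) ∧
    ∀ t ∈ Set.Icc (0:ℝ) P,
      t ^ 3 / (2 * Real.pi ^ 2 * P) ≤
        sweptArea (fun t => ∫ s in (0:ℝ)..t, Real.cos (2 * Real.pi * s / P - β))
          (fun t => ∫ s in (0:ℝ)..t, Real.sin (2 * Real.pi * s / P - β)) 0 t := by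
  have hω : 2 * π / P ≠ 0 := by positivity
  have harea (t : ℝ) :
      sweptArea (fun t => ∫ s in (0:ℝ)..t, cos (2 * π * s / P - β))
          (fun t => ∫ s in (0:ℝ)..t, sin (2 * π * s / P - β)) 0 t
        = (P / (4 * π)) * (t - (P / (2 * π)) * sin (2 * π * t / P)) := by
    simp only [mul_div_right_comm (2 * π) _ P]
    rw [sweptArea_circularArc hω]
    field_simp
    ring
  refine ⟨fun t _ => harea t, ?_⟩
  rintro t ⟨ht₀, htP⟩
  have hx : 2 * π * t / P ≤ 2 * π := by
    rw [div_le_iff₀ hP]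
    exact mul_le_mul_of_nonneg_left htP (by positivity)
  have hcube := cube_div_le_sub_sin (by positivity) hx
  calc t ^ 3 / (2 * π ^ 2 * P) = P ^ 2 / (8 * π ^ 2) * ((2 * π * t / P) ^ 3 / (2 * π ^ 3)) := by
        field_simp
        ring
    _ ≤ P ^ 2 / (8 * π ^ 2) * (2 * π * t / P - sin (2 * π * t / P)) := by gcongr
    _ = _ := by
        rw [harea]
        field_simp
        ring

end
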